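/- arXiv:1908.11360 — 2 statements merged into one kernel-verified Lean document; each statement's English description precedes it below -/
import Mathlib

section
/- For all n, m ∈ ℕ with m ≥ 1, every set Γ of L^m-formulas and every formula φ ∈ L^m: Γ ⊢_{Ldm_n^m} φ if and only if Γ ⊩ φ (soundness and completeness of the Hilbert calculus Ldm_n^m with respect to Ldm_n^m-models). -/
/-!
Soundness is an induction on derivations: the S5 axioms hold because each `R_i` is an
equivalence relation, (IOA) because of (C2), and `APC_n` because of (C3).

Completeness uses a canonical model. Its worlds are the maximal consistent sets with the same
`□`-formulas as a fixed one, and agent `i` relates two worlds when they contain the same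
`[i]`-formulas, so (C1) holds by construction. For an S5 modality this relation coincides
with the usual canonical accessibility `{ψ | [i]ψ ∈ Δ} ⊆ Δ'`, which gives the truth lemma.
(C2) holds because the `[i]`-contents of `m` worlds are jointly consistent, by (IOA). For
(C3), if no world `w_k` were related to a later one among `w_0, …, w_n`, there would be
formulas `g_k` with `[i]g_k ∈ w_k` and `g_k ∉ w_j` for all `k < j`, and the instance of `APC_n`
for `g_0, …, g_{n-1}` would fail in `w_n`.
-/

namespace Stit

/-- Formulas of the language `L^m` (negation normal form), with agents `Fin m`
and propositional variables indexed by `ℕ`. -/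
inductive Fml (m : ℕ) : Type
  | pos : ℕ → Fml m                  -- p
  | neg : ℕ → Fml m                  -- p̄
  | and : Fml m → Fml m → Fml m      -- φ ∧ ψ
  | or  : Fml m → Fml m → Fml m      -- φ ∨ ψ
  | box : Fml m → Fml m              -- □φ
  | dia : Fml m → Fml m              -- ◇φ
  | ag  : Fin m → Fml m → Fml m      -- [i]φ
  | dag : Fin m → Fml m → Fml m      -- ⟨i⟩φ

namespace Fml

/-- Negation `φ̄`: replace every connective/modality by its dual and swap `p` with `p̄`. -/
def negF {m : ℕ} : Fml m → Fml m
  | pos p => neg p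
  | neg p => pos p
  | and φ ψ => or φ.negF ψ.negF
  | or φ ψ => and φ.negF ψ.negF
  | box φ => dia φ.negF
  | dia φ => box φ.negF
  | ag i φ => dag i φ.negF
  | dag i φ => ag i φ.negF

/-- `φ → ψ` abbreviates `φ̄ ∨ ψ`. -/
def impF {m : ℕ} (φ ψ : Fml m) : Fml m := or φ.negF ψ

end Fml

/-- `f 0 ∧ f 1 ∧ ⋯ ∧ f k` (left-associated). -/
def conjUpTo {m : ℕ} (f : ℕ → Fml m) : ℕ → Fml m
  | 0 => f 0
  | k+1 => Fml.and (conjUpTo f k) (f (k+1))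

/-- `f 0 ∨ f 1 ∨ ⋯ ∨ f k` (left-associated). -/
def disjUpTo {m : ℕ} (f : ℕ → Fml m) : ℕ → Fml m
  | 0 => f 0
  | k+1 => Fml.or (disjUpTo f k) (f (k+1))

/-- `(f 0)̄ ∧ ((f 1)̄ ∧ ⋯ ((f (j-1))̄ ∧ base))`. -/
def prefNegConj {m : ℕ} (f : ℕ → Fml m) : ℕ → Fml m → Fml m
  | 0, base => base
  | j+1, base => prefNegConj f j (Fml.and (f j).negF base)

/-- The antecedent `◇[i]φ_0 ∧ ◇(φ̄_0 ∧ [i]φ_1) ∧ ⋯ ∧ ◇(φ̄_0 ∧ ⋯ ∧ φ̄_{n'-1} ∧ [i]φ_{n'})`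
of the (n'+1)-choice axiom. -/
def apcAnte {m : ℕ} (i : Fin m) (f : ℕ → Fml m) (n' : ℕ) : Fml m :=
  conjUpTo (fun j => Fml.dia (prefNegConj f j (Fml.ag i (f j)))) n'

/-- The n-choice axiom `APC_n^i` for `n = n' + 1` choices `φ_0, …, φ_{n'}`. -/
def apcAx {m : ℕ} (i : Fin m) (f : ℕ → Fml m) (n' : ℕ) : Fml m :=
  (apcAnte i f n').impF (disjUpTo f n')

def diaAgIdx {m : ℕ} (f : Fin m → Fml m) (j : ℕ) : Fml m :=
  if h : j < m then Fml.dia (Fml.ag ⟨j, h⟩ (f ⟨j, h⟩)) else Fml.pos 0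

def agIdx {m : ℕ} (f : Fin m → Fml m) (j : ℕ) : Fml m :=
  if h : j < m then Fml.ag ⟨j, h⟩ (f ⟨j, h⟩) else Fml.pos 0

/-- The independence-of-agents axiom `⋀_{i∈Ag} ◇[i]φ_i → ◇(⋀_{i∈Ag} [i]φ_i)`
(for `m ≥ 1` agents). -/
def ioaAx {m : ℕ} (f : Fin m → Fml m) : Fml m :=
  (conjUpTo (diaAgIdx f) (m-1)).impF (Fml.dia (conjUpTo (agIdx f) (m-1)))

/-- An `Ldm_n^m`-model on the carrier `W`: each `rel i` is an equivalence relation (C1),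
independence of agents (C2), the `n`-choice condition when `n > 0` (C3), plus a valuation. -/
structure ModelOn (n m : ℕ) (W : Type) : Type where
  nonemp : Nonempty W
  rel : Fin m → W → W → Prop
  refl : ∀ i w, rel i w w
  symm : ∀ i w u, rel i w u → rel i u w
  trans : ∀ i w u v, rel i w u → rel i u v → rel i w v
  ioa : ∀ u : Fin m → W, ∃ v, ∀ i, rel i (u i) v
  apc : 0 < n → ∀ (i : Fin m) (w : Fin (n+1) → W),
      ∃ k j : Fin (n+1), k < j ∧ rel i (w k) (w j)
  val : ℕ → Set W

/-- Satisfaction `M, w ⊩ φ`. -/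
def Sat {n m : ℕ} {W : Type} (M : ModelOn n m W) : W → Fml m → Prop
  | w, .pos p => w ∈ M.val p
  | w, .neg p => w ∉ M.val p
  | w, .and φ ψ => Sat M w φ ∧ Sat M w ψ
  | w, .or φ ψ => Sat M w φ ∨ Sat M w ψ
  | _, .box φ => ∀ u, Sat M u φ
  | _, .dia φ => ∃ u, Sat M u φ
  | w, .ag i φ => ∀ u, M.rel i w u → Sat M u φ
  | w, .dag i φ => ∃ u, M.rel i w u ∧ Sat M u φ

/-- Validity: `⊩ φ`. -/
def Valid (n m : ℕ) (φ : Fml m) : Prop :=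
  ∀ (W : Type) (M : ModelOn n m W) (w : W), Sat M w φ

/-- Semantic consequence `Γ ⊩ φ`. -/
def SemConseq (n m : ℕ) (Γ : Set (Fml m)) (φ : Fml m) : Prop :=
  ∀ (W : Type) (M : ModelOn n m W) (w : W), (∀ ψ ∈ Γ, Sat M w ψ) → Sat M w φ

/-- The Hilbert calculus `Ldm_n^m`: classical propositional logic, S5 for `□` and each
`[i]`, the bridge axiom, IOA, the n-choice axioms (for `n > 0`), with modus ponens and
necessitation (applied to theorems). `Hderiv n m Γ φ` is `Γ ⊢_{Ldm_n^m} φ`. -/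
inductive Hderiv (n m : ℕ) : Set (Fml m) → Fml m → Prop
  | prem {Γ} {φ} (h : φ ∈ Γ) : Hderiv n m Γ φ
  | ax1 {Γ} (φ ψ : Fml m) : Hderiv n m Γ (φ.impF (ψ.impF φ))
  | ax2 {Γ} (φ ψ χ : Fml m) :
      Hderiv n m Γ ((φ.impF (ψ.impF χ)).impF ((φ.impF ψ).impF (φ.impF χ)))
  | ax3 {Γ} (φ ψ : Fml m) :
      Hderiv n m Γ ((ψ.negF.impF φ.negF).impF (φ.impF ψ))
  | boxK {Γ} (φ ψ : Fml m) :
      Hderiv n m Γ ((Fml.box (φ.impF ψ)).impF ((Fml.box φ).impF (Fml.box ψ)))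
  | boxT {Γ} (φ : Fml m) : Hderiv n m Γ ((Fml.box φ).impF φ)
  | box5 {Γ} (φ : Fml m) : Hderiv n m Γ ((Fml.dia φ).impF (Fml.box (Fml.dia φ)))
  | boxDual {Γ} (φ : Fml m) : Hderiv n m Γ (Fml.or (Fml.box φ) (Fml.dia φ.negF))
  | agK {Γ} (i : Fin m) (φ ψ : Fml m) :
      Hderiv n m Γ ((Fml.ag i (φ.impF ψ)).impF ((Fml.ag i φ).impF (Fml.ag i ψ)))
  | agT {Γ} (i : Fin m) (φ : Fml m) : Hderiv n m Γ ((Fml.ag i φ).impF φ)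
  | ag5 {Γ} (i : Fin m) (φ : Fml m) :
      Hderiv n m Γ ((Fml.dag i φ).impF (Fml.ag i (Fml.dag i φ)))
  | agDual {Γ} (i : Fin m) (φ : Fml m) :
      Hderiv n m Γ (Fml.or (Fml.ag i φ) (Fml.dag i φ.negF))
  | bridge {Γ} (i : Fin m) (φ : Fml m) :
      Hderiv n m Γ ((Fml.box φ).impF (Fml.ag i φ))
  | ioa {Γ} (f : Fin m → Fml m) : Hderiv n m Γ (ioaAx f)
  | apc {Γ} (hn : 0 < n) (i : Fin m) (f : ℕ → Fml m) :
      Hderiv n m Γ (apcAx i f (n-1))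
  | mp {Γ} {φ ψ} : Hderiv n m Γ (φ.impF ψ) → Hderiv n m Γ φ → Hderiv n m Γ ψ
  | nec {Γ} {φ} : Hderiv n m ∅ φ → Hderiv n m Γ (Fml.box φ)

/-- A relational atom `R_i x y`. -/
abbrev RAtom (m : ℕ) : Type := Fin m × ℕ × ℕ
/-- The relational part of a labelled sequent: a multiset of relational atoms. -/
abbrev RAtoms (m : ℕ) : Type := Multiset (RAtom m)
/-- A labelled formula `x : φ`. -/
abbrev LFml (m : ℕ) : Type := ℕ × Fml m
/-- The formula part of a labelled sequent: a multiset of labelled formulas. -/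
abbrev LFmls (m : ℕ) : Type := Multiset (LFml m)

/-- The label `v` does not occur in the labelled sequent `R, Γ` (eigenvariable condition). -/
def freshIn {m : ℕ} (v : ℕ) (R : RAtoms m) (Γ : LFmls m) : Prop :=
  (∀ a ∈ R, a.2.1 ≠ v ∧ a.2.2 ≠ v) ∧ ∀ e ∈ Γ, e.1 ≠ v

/-- `Reach R i w u`: `u` is `i`-reachable from `w`, i.e. there is a (possibly empty)
path of `R_i`-atoms of `R` (traversed in either direction) connecting `w` to `u`. -/
inductive Reach {m : ℕ} (R : RAtoms m) (i : Fin m) : ℕ → ℕ → Prop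
  | refl (w : ℕ) : Reach R i w w
  | fwd {w u v : ℕ} : Reach R i w u → ((i, u, v) : RAtom m) ∈ R → Reach R i w v
  | bwd {w u v : ℕ} : Reach R i w u → ((i, v, u) : RAtom m) ∈ R → Reach R i w v

/-- The relational atoms `R_1 u_1 v, …, R_m u_m v` used by the rule (IOA). -/
def ioaAtoms {m : ℕ} (u : Fin m → ℕ) (v : ℕ) : RAtoms m :=
  Multiset.ofList ((List.finRange m).map fun i => ((i, u i, v) : RAtom m))

/-- Which optional rules are present in a labelled calculus, and whether the
`[i]`-rule keeps its principal formula in the premise. -/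
structure Flags : Type where
  refl : Bool    -- (refl_i)
  eucl : Bool    -- (eucl_i)
  diaAg : Bool   -- (⟨i⟩)
  pr : Bool      -- (Pr_i)
  ioa : Bool     -- (IOA)
  agKeep : Bool  -- premise of ([i]) keeps w:[i]φ

/-- `SeqH fl n m h R Γ`: the labelled sequent `R, Γ` has a derivation of height at most
`h` in the labelled calculus determined by `fl` (with parameters `n`, `m`). -/
inductive SeqH (fl : Flags) (n m : ℕ) : ℕ → RAtoms m → LFmls m → Prop
  | id {h : ℕ} {R : RAtoms m} {Γ : LFmls m} (w p : ℕ) :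
      SeqH fl n m h R ((w, Fml.pos p) ::ₘ (w, Fml.neg p) ::ₘ Γ)
  | andR {h R Γ} {w : ℕ} {φ ψ : Fml m} :
      SeqH fl n m h R ((w, Fml.and φ ψ) ::ₘ (w, φ) ::ₘ Γ) →
      SeqH fl n m h R ((w, Fml.and φ ψ) ::ₘ (w, ψ) ::ₘ Γ) →
      SeqH fl n m (h+1) R ((w, Fml.and φ ψ) ::ₘ Γ)
  | orR {h R Γ} {w : ℕ} {φ ψ : Fml m} :
      SeqH fl n m h R ((w, Fml.or φ ψ) ::ₘ (w, φ) ::ₘ (w, ψ) ::ₘ Γ) →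
      SeqH fl n m (h+1) R ((w, Fml.or φ ψ) ::ₘ Γ)
  | boxR {h R Γ} {w v : ℕ} {φ : Fml m}
      (hv : freshIn v R ((w, Fml.box φ) ::ₘ Γ)) :
      SeqH fl n m h R ((w, Fml.box φ) ::ₘ (v, φ) ::ₘ Γ) →
      SeqH fl n m (h+1) R ((w, Fml.box φ) ::ₘ Γ)
  | diaR {h R Γ} {w u : ℕ} {φ : Fml m} :
      SeqH fl n m h R ((w, Fml.dia φ) ::ₘ (u, φ) ::ₘ Γ) →
      SeqH fl n m (h+1) R ((w, Fml.dia φ) ::ₘ Γ)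
  | agR {h R Γ} {w v : ℕ} {i : Fin m} {φ : Fml m} (hfl : fl.agKeep = false)
      (hv : freshIn v R ((w, Fml.ag i φ) ::ₘ Γ)) :
      SeqH fl n m h (((i, w, v) : RAtom m) ::ₘ R) ((v, φ) ::ₘ Γ) →
      SeqH fl n m (h+1) R ((w, Fml.ag i φ) ::ₘ Γ)
  | agRKeep {h R Γ} {w v : ℕ} {i : Fin m} {φ : Fml m} (hfl : fl.agKeep = true)
      (hv : freshIn v R ((w, Fml.ag i φ) ::ₘ Γ)) :
      SeqH fl n m h (((i, w, v) : RAtom m) ::ₘ R) ((w, Fml.ag i φ) ::ₘ (v, φ) ::ₘ Γ) →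
      SeqH fl n m (h+1) R ((w, Fml.ag i φ) ::ₘ Γ)
  | dagR {h R Γ} {w u : ℕ} {i : Fin m} {φ : Fml m} (hfl : fl.diaAg = true) :
      SeqH fl n m h (((i, w, u) : RAtom m) ::ₘ R) ((w, Fml.dag i φ) ::ₘ (u, φ) ::ₘ Γ) →
      SeqH fl n m (h+1) (((i, w, u) : RAtom m) ::ₘ R) ((w, Fml.dag i φ) ::ₘ Γ)
  | reflR {h R Γ} {i : Fin m} {w : ℕ} (hfl : fl.refl = true) :
      SeqH fl n m h (((i, w, w) : RAtom m) ::ₘ R) Γ →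
      SeqH fl n m (h+1) R Γ
  | euclR {h R Γ} {i : Fin m} {w u v : ℕ} (hfl : fl.eucl = true) :
      SeqH fl n m h (((i, w, u) : RAtom m) ::ₘ ((i, w, v) : RAtom m) ::ₘ
        ((i, u, v) : RAtom m) ::ₘ R) Γ →
      SeqH fl n m (h+1) (((i, w, u) : RAtom m) ::ₘ ((i, w, v) : RAtom m) ::ₘ R) Γ
  | ioaR {h R Γ} (hfl : fl.ioa = true) (u : Fin m → ℕ) (v : ℕ) (hv : freshIn v R Γ) :
      SeqH fl n m h (ioaAtoms u v + R) Γ →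
      SeqH fl n m (h+1) R Γ
  | apcR {h R Γ} (hn : 0 < n) (i : Fin m) (w : Fin (n+1) → ℕ) :
      (∀ k j : Fin (n+1), k < j → SeqH fl n m h (((i, w k, w j) : RAtom m) ::ₘ R) Γ) →
      SeqH fl n m (h+1) R Γ
  | prR {h R Γ} {w u : ℕ} {i : Fin m} {φ : Fml m} (hfl : fl.pr = true)
      (hreach : Reach R i w u) :
      SeqH fl n m h R ((w, Fml.dag i φ) ::ₘ (u, φ) ::ₘ Γ) →
      SeqH fl n m (h+1) R ((w, Fml.dag i φ) ::ₘ Γ)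

/-- Derivability (of some height) in the labelled calculus determined by `fl`. -/
def Seq (fl : Flags) (n m : ℕ) (R : RAtoms m) (Γ : LFmls m) : Prop :=
  ∃ h, SeqH fl n m h R Γ

/-- The calculus `G3Ldm_n^m`. -/
def G3flags : Flags := ⟨true, true, true, false, true, false⟩
/-- The calculus `G3Ldm_n^m + PR`. -/
def G3PRflags : Flags := ⟨true, true, true, true, true, false⟩
/-- `G3Ldm_n^m + PR` without the rules `(refl_i)`. -/
def G3PRnoReflFlags : Flags := ⟨false, true, true, true, true, false⟩
/-- `G3Ldm_n^m + PR` without the rules `(eucl_i)`. -/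
def G3PRnoEuclFlags : Flags := ⟨true, false, true, true, true, false⟩
/-- The refined calculus `Ldm_n^m L`. -/
def LdmLflags : Flags := ⟨false, false, false, true, true, true⟩
/-- The refined single-agent calculus `Ldm_n^1 L` (no (IOA)). -/
def LdmL1flags : Flags := ⟨false, false, false, true, false, true⟩

/-- Substitution of the label `y` for the label `x`. -/
def substLab (x y v : ℕ) : ℕ := if v = x then y else v

def substR {m : ℕ} (x y : ℕ) (R : RAtoms m) : RAtoms m :=
  R.map fun a => (a.1, substLab x y a.2.1, substLab x y a.2.2)

def substF {m : ℕ} (x y : ℕ) (Γ : LFmls m) : LFmls m :=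
  Γ.map fun e => (substLab x y e.1, e.2)

/-- Height-preserving invertibility of every inference rule of the calculus given by `fl`. -/
def InvertAll (fl : Flags) (n m : ℕ) : Prop :=
  (∀ h R Γ (w : ℕ) (φ ψ : Fml m), SeqH fl n m h R ((w, Fml.and φ ψ) ::ₘ Γ) →
     SeqH fl n m h R ((w, Fml.and φ ψ) ::ₘ (w, φ) ::ₘ Γ) ∧
     SeqH fl n m h R ((w, Fml.and φ ψ) ::ₘ (w, ψ) ::ₘ Γ)) ∧
  (∀ h R Γ (w : ℕ) (φ ψ : Fml m), SeqH fl n m h R ((w, Fml.or φ ψ) ::ₘ Γ) →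
     SeqH fl n m h R ((w, Fml.or φ ψ) ::ₘ (w, φ) ::ₘ (w, ψ) ::ₘ Γ)) ∧
  (∀ h R Γ (w v : ℕ) (φ : Fml m), freshIn v R ((w, Fml.box φ) ::ₘ Γ) →
     SeqH fl n m h R ((w, Fml.box φ) ::ₘ Γ) →
     SeqH fl n m h R ((w, Fml.box φ) ::ₘ (v, φ) ::ₘ Γ)) ∧
  (∀ h R Γ (w u : ℕ) (φ : Fml m), SeqH fl n m h R ((w, Fml.dia φ) ::ₘ Γ) →
     SeqH fl n m h R ((w, Fml.dia φ) ::ₘ (u, φ) ::ₘ Γ)) ∧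
  (fl.agKeep = false → ∀ h R Γ (w v : ℕ) (i : Fin m) (φ : Fml m),
     freshIn v R ((w, Fml.ag i φ) ::ₘ Γ) →
     SeqH fl n m h R ((w, Fml.ag i φ) ::ₘ Γ) →
     SeqH fl n m h (((i, w, v) : RAtom m) ::ₘ R) ((v, φ) ::ₘ Γ)) ∧
  (fl.agKeep = true → ∀ h R Γ (w v : ℕ) (i : Fin m) (φ : Fml m),
     freshIn v R ((w, Fml.ag i φ) ::ₘ Γ) →
     SeqH fl n m h R ((w, Fml.ag i φ) ::ₘ Γ) →
     SeqH fl n m h (((i, w, v) : RAtom m) ::ₘ R) ((w, Fml.ag i φ) ::ₘ (v, φ) ::ₘ Γ)) ∧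
  (fl.diaAg = true → ∀ h R Γ (w u : ℕ) (i : Fin m) (φ : Fml m),
     SeqH fl n m h (((i, w, u) : RAtom m) ::ₘ R) ((w, Fml.dag i φ) ::ₘ Γ) →
     SeqH fl n m h (((i, w, u) : RAtom m) ::ₘ R) ((w, Fml.dag i φ) ::ₘ (u, φ) ::ₘ Γ)) ∧
  (fl.refl = true → ∀ h R Γ (i : Fin m) (w : ℕ), SeqH fl n m h R Γ →
     SeqH fl n m h (((i, w, w) : RAtom m) ::ₘ R) Γ) ∧
  (fl.eucl = true → ∀ h R Γ (i : Fin m) (w u v : ℕ),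
     SeqH fl n m h (((i, w, u) : RAtom m) ::ₘ ((i, w, v) : RAtom m) ::ₘ R) Γ →
     SeqH fl n m h (((i, w, u) : RAtom m) ::ₘ ((i, w, v) : RAtom m) ::ₘ
       ((i, u, v) : RAtom m) ::ₘ R) Γ) ∧
  (fl.ioa = true → ∀ h R Γ (u : Fin m → ℕ) (v : ℕ), freshIn v R Γ →
     SeqH fl n m h R Γ → SeqH fl n m h (ioaAtoms u v + R) Γ) ∧
  (0 < n → ∀ h R Γ (i : Fin m) (w : Fin (n+1) → ℕ) (k j : Fin (n+1)), k < j →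
     SeqH fl n m h R Γ → SeqH fl n m h (((i, w k, w j) : RAtom m) ::ₘ R) Γ) ∧
  (fl.pr = true → ∀ h R Γ (w u : ℕ) (i : Fin m) (φ : Fml m), Reach R i w u →
     SeqH fl n m h R ((w, Fml.dag i φ) ::ₘ Γ) →
     SeqH fl n m h R ((w, Fml.dag i φ) ::ₘ (u, φ) ::ₘ Γ))

/-- A labelled sequent `R, Γ` is satisfied in `M` under the interpretation `I`. -/
def SeqSat {n m : ℕ} {W : Type} (M : ModelOn n m W) (I : ℕ → W)
    (R : RAtoms m) (Γ : LFmls m) : Prop :=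
  (∀ a ∈ R, M.rel a.1 (I a.2.1) (I a.2.2)) → ∃ e ∈ Γ, Sat M (I e.1) e.2

/-- A labelled sequent is valid: satisfied in every model under every interpretation. -/
def SeqValid (n m : ℕ) (R : RAtoms m) (Γ : LFmls m) : Prop :=
  ∀ (W : Type) (M : ModelOn n m W) (I : ℕ → W), SeqSat M I R Γ

namespace Fml

variable {m : ℕ}

@[simp]
theorem negF_negF (φ : Fml m) : φ.negF.negF = φ := by
  induction φ <;> simp [negF, *]

theorem or_eq_impF (φ ψ : Fml m) : or φ ψ = φ.negF.impF ψ := by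
  simp [impF]

end Fml

open Fml

def botF {m : ℕ} : Fml m := .and (.pos 0) (.neg 0)

namespace Hderiv

variable {n m : ℕ} {Γ Δ : Set (Fml m)} {φ ψ : Fml m}

/-- Induction on derivations from `Γ` in which the axioms and the conclusions of
necessitation form a single case: formulas derivable from any premises. -/
theorem closure_induction {P : (φ : Fml m) → Hderiv n m Γ φ → Prop}
    (prem : ∀ ψ (hψ : ψ ∈ Γ), P ψ (.prem hψ))
    (uniform : ∀ ψ (hψ : ∀ Δ, Hderiv n m Δ ψ), P ψ (hψ Γ))
    (mp : ∀ ψ χ h₁ h₂, P (ψ.impF χ) h₁ → P ψ h₂ → P χ (.mp h₁ h₂))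
    (h : Hderiv n m Γ φ) : P φ h := by
  induction h with
  | prem hψ => exact prem _ hψ
  | mp _ _ ih₁ ih₂ => exact mp _ _ _ _ (ih₁ prem uniform mp) (ih₂ prem uniform mp)
  | nec hψ => exact uniform _ fun _ => .nec hψ
  | ax1 φ ψ => exact uniform _ fun _ => .ax1 φ ψ
  | ax2 φ ψ χ => exact uniform _ fun _ => .ax2 φ ψ χ
  | ax3 φ ψ => exact uniform _ fun _ => .ax3 φ ψ
  | boxK φ ψ => exact uniform _ fun _ => .boxK φ ψ
  | boxT φ => exact uniform _ fun _ => .boxT φ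
  | box5 φ => exact uniform _ fun _ => .box5 φ
  | boxDual φ => exact uniform _ fun _ => .boxDual φ
  | agK i φ ψ => exact uniform _ fun _ => .agK i φ ψ
  | agT i φ => exact uniform _ fun _ => .agT i φ
  | ag5 i φ => exact uniform _ fun _ => .ag5 i φ
  | agDual i φ => exact uniform _ fun _ => .agDual i φ
  | bridge i φ => exact uniform _ fun _ => .bridge i φ
  | ioa f => exact uniform _ fun _ => .ioa f
  | apc hn i f => exact uniform _ fun _ => .apc hn i f

theorem trans (h : Hderiv n m Δ φ) (hΔ : ∀ ψ ∈ Δ, Hderiv n m Γ ψ) : Hderiv n m Γ φ := by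
  induction h using closure_induction with
  | prem ψ hψ => exact hΔ ψ hψ
  | uniform ψ hψ => exact hψ Γ
  | mp ψ χ _ _ h₁ h₂ => exact .mp h₁ h₂

theorem mono (h : Hderiv n m Δ φ) (hΔ : Δ ⊆ Γ) : Hderiv n m Γ φ :=
  h.trans fun _ hψ => .prem (hΔ hψ)

theorem impF_self (φ : Fml m) : Hderiv n m Γ (φ.impF φ) :=
  .mp (.mp (.ax2 φ (φ.impF φ) φ) (.ax1 φ (φ.impF φ))) (.ax1 φ φ)

theorem deduction (h : Hderiv n m (insert φ Γ) ψ) : Hderiv n m Γ (φ.impF ψ) := by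
  induction h using closure_induction with
  | prem χ hχ =>
    rcases hχ with rfl | hχ
    · exact impF_self χ
    · exact .mp (.ax1 χ φ) (.prem hχ)
  | uniform χ hχ => exact .mp (.ax1 χ φ) (hχ Γ)
  | mp χ θ _ _ h₁ h₂ => exact .mp (.mp (.ax2 φ χ θ) h₁) h₂

theorem absurd (h : Hderiv n m Γ φ) (h' : Hderiv n m Γ φ.negF) (ψ : Fml m) :
    Hderiv n m Γ ψ :=
  .mp (.mp (.ax3 φ ψ) (.mp (.ax1 φ.negF ψ.negF) h')) h

theorem of_insert_negF_bot (h : Hderiv n m (insert φ.negF Γ) botF) : Hderiv n m Γ φ := by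
  have := Hderiv.ax3 (n := n) (Γ := Γ) botF.negF φ
  rw [negF_negF] at this
  exact .mp (.mp this (deduction h)) (impF_self (.pos 0))

theorem negF_of_insert_bot (h : Hderiv n m (insert φ Γ) botF) : Hderiv n m Γ φ.negF :=
  of_insert_negF_bot (by rwa [negF_negF])

theorem exists_mem_of_directedOn {c : Set (Set (Fml m))} (hc : DirectedOn (· ⊆ ·) c)
    (hne : c.Nonempty) (h : Hderiv n m (⋃₀ c) φ) : ∃ T ∈ c, Hderiv n m T φ := by
  induction h using closure_induction with
  | prem ψ hψ =>
    obtain ⟨T, hT, hψT⟩ := hψ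
    exact ⟨T, hT, .prem hψT⟩
  | uniform ψ hψ => exact ⟨hne.some, hne.some_mem, hψ _⟩
  | mp ψ χ _ _ ih₁ ih₂ =>
    obtain ⟨T₁, hT₁, h₁⟩ := ih₁
    obtain ⟨T₂, hT₂, h₂⟩ := ih₂
    obtain ⟨T, hT, hT₁T, hT₂T⟩ := hc T₁ hT₁ T₂ hT₂
    exact ⟨T, hT, .mp (h₁.mono hT₁T) (h₂.mono hT₂T)⟩

end Hderiv

structure IsBooleanValuation {m : ℕ} (T : Fml m → Prop) : Prop where
  negF : ∀ φ, T φ.negF ↔ ¬ T φ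
  and : ∀ φ ψ, T (.and φ ψ) ↔ T φ ∧ T ψ
  or : ∀ φ ψ, T (.or φ ψ) ↔ T φ ∨ T ψ

namespace IsBooleanValuation

variable {m : ℕ} {T : Fml m → Prop} (hT : IsBooleanValuation T)
include hT

theorem impF (φ ψ : Fml m) : T (φ.impF ψ) ↔ (T φ → T ψ) := by
  rw [Fml.impF, hT.or, hT.negF, imp_iff_not_or]

theorem conjUpTo (f : ℕ → Fml m) (k : ℕ) : T (conjUpTo f k) ↔ ∀ j ≤ k, T (f j) := by
  induction k with
  | zero => simp [Stit.conjUpTo]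
  | succ k ih => simp [Stit.conjUpTo, hT.and, ih, Nat.le_succ_iff_eq_or_le, or_imp,
      forall_and, and_comm]

theorem disjUpTo (f : ℕ → Fml m) (k : ℕ) : T (disjUpTo f k) ↔ ∃ j ≤ k, T (f j) := by
  induction k with
  | zero => simp [Stit.disjUpTo]
  | succ k ih => simp [Stit.disjUpTo, hT.or, ih, Nat.le_succ_iff_eq_or_le, or_and_right,
      exists_or, or_comm]

theorem prefNegConj (f : ℕ → Fml m) (j : ℕ) (base : Fml m) :
    T (prefNegConj f j base) ↔ (∀ l < j, ¬ T (f l)) ∧ T base := by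
  induction j generalizing base with
  | zero => simp [Stit.prefNegConj]
  | succ j ih => simp [Stit.prefNegConj, ih, hT.and, hT.negF, Nat.le_iff_lt_or_eq,
      or_imp, forall_and, and_assoc]

theorem conjUpTo_agents (hm : 1 ≤ m) (g : Fin m → Fml m) (c : Fml m) :
    T (Stit.conjUpTo (fun j => if h : j < m then g ⟨j, h⟩ else c) (m - 1)) ↔
      ∀ i, T (g i) := by
  rw [hT.conjUpTo]
  refine ⟨fun h i => ?_, fun h j hj => ?_⟩
  · simpa using h i (Nat.le_sub_one_of_lt i.isLt)
  · simpa [show j < m by omega] using h ⟨j, by omega⟩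

theorem conjUpTo_agIdx (hm : 1 ≤ m) (f : Fin m → Fml m) :
    T (Stit.conjUpTo (agIdx f) (m - 1)) ↔ ∀ i, T (.ag i (f i)) :=
  hT.conjUpTo_agents hm (fun i => .ag i (f i)) (.pos 0)

theorem conjUpTo_diaAgIdx (hm : 1 ≤ m) (f : Fin m → Fml m) :
    T (Stit.conjUpTo (diaAgIdx f) (m - 1)) ↔ ∀ i, T (.dia (.ag i (f i))) :=
  hT.conjUpTo_agents hm (fun i => .dia (.ag i (f i))) (.pos 0)

end IsBooleanValuation

def Consistent (n m : ℕ) (Γ : Set (Fml m)) : Prop := ¬ Hderiv n m Γ botF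

structure MaxConsistent (n m : ℕ) (Δ : Set (Fml m)) : Prop where
  consistent : Consistent n m Δ
  mem_or_negF_mem : ∀ φ, φ ∈ Δ ∨ φ.negF ∈ Δ

section Consistency

variable {n m : ℕ} {Γ Δ : Set (Fml m)} {φ ψ : Fml m}

theorem Consistent.insert_or_insert_negF (hΓ : Consistent n m Γ) (φ : Fml m) :
    Consistent n m (insert φ Γ) ∨ Consistent n m (insert φ.negF Γ) := by
  by_contra! h
  exact hΓ ((Hderiv.of_insert_negF_bot (not_not.1 h.2)).absurd
    (Hderiv.negF_of_insert_bot (not_not.1 h.1)) botF)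

theorem exists_maxConsistent_superset (hΓ : Consistent n m Γ) :
    ∃ Δ, Γ ⊆ Δ ∧ MaxConsistent n m Δ := by
  obtain ⟨Δ, hΓΔ, hΔ⟩ := zorn_subset_nonempty {T | Consistent n m T}
    (fun c hc hchain hne => ⟨⋃₀ c, fun hbot =>
      let ⟨T, hT, hTbot⟩ := Hderiv.exists_mem_of_directedOn hchain.directedOn hne hbot
      hc hT hTbot, fun _ => Set.subset_sUnion_of_mem⟩) Γ hΓ
  refine ⟨Δ, hΓΔ, hΔ.prop, fun φ => ?_⟩
  exact (hΔ.prop.insert_or_insert_negF φ).imp hΔ.mem_of_prop_insert hΔ.mem_of_prop_insert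

namespace MaxConsistent

variable (hΔ : MaxConsistent n m Δ)
include hΔ

theorem mem_of_hderiv (h : Hderiv n m Δ φ) : φ ∈ Δ :=
  (hΔ.mem_or_negF_mem φ).resolve_right fun hφ => hΔ.consistent (h.absurd (.prem hφ) botF)

theorem negF_mem_iff : φ.negF ∈ Δ ↔ φ ∉ Δ :=
  ⟨fun h hφ => hΔ.consistent ((Hderiv.prem hφ).absurd (.prem h) botF),
    (hΔ.mem_or_negF_mem φ).resolve_left⟩

theorem impF_mem_iff : φ.impF ψ ∈ Δ ↔ (φ ∈ Δ → ψ ∈ Δ) := by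
  refine ⟨fun h hφ => hΔ.mem_of_hderiv (.mp (.prem h) (.prem hφ)), fun h => ?_⟩
  by_cases hφ : φ ∈ Δ
  · exact hΔ.mem_of_hderiv (.mp (.ax1 ψ φ) (.prem (h hφ)))
  · exact hΔ.mem_of_hderiv
      (.mp (.ax3 φ ψ) (.mp (.ax1 φ.negF ψ.negF) (.prem (hΔ.negF_mem_iff.2 hφ))))

theorem isBooleanValuation : IsBooleanValuation (· ∈ Δ) where
  negF _ := hΔ.negF_mem_iff
  or φ ψ := by
    rw [or_eq_impF, hΔ.impF_mem_iff, hΔ.negF_mem_iff, imp_iff_not_or, not_not]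
  and φ ψ := by
    rw [← not_iff_not, ← hΔ.negF_mem_iff]
    change Fml.or _ _ ∈ Δ ↔ _
    rw [or_eq_impF, negF_negF, hΔ.impF_mem_iff, hΔ.negF_mem_iff, not_and]

end MaxConsistent

theorem hderiv_iff_forall_maxConsistent :
    Hderiv n m Γ φ ↔ ∀ Δ, MaxConsistent n m Δ → Γ ⊆ Δ → φ ∈ Δ := by
  refine ⟨fun h Δ hΔ hΓΔ => hΔ.mem_of_hderiv (h.mono hΓΔ), fun h => ?_⟩
  by_contra hφ
  obtain ⟨Δ, hΓΔ, hΔ⟩ := exists_maxConsistent_superset (n := n) (Γ := insert φ.negF Γ)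
    fun hbot => hφ (Hderiv.of_insert_negF_bot hbot)
  exact hΔ.negF_mem_iff.1 (hΓΔ (Set.mem_insert _ _))
    (h Δ hΔ ((Set.subset_insert _ _).trans hΓΔ))

end Consistency

namespace Hderiv

variable {n m : ℕ} {Γ : Set (Fml m)} {φ ψ : Fml m}

theorem and_intro (h₁ : Hderiv n m Γ φ) (h₂ : Hderiv n m Γ ψ) : Hderiv n m Γ (.and φ ψ) :=
  hderiv_iff_forall_maxConsistent.2 fun _ hΔ hΓΔ => (hΔ.isBooleanValuation.and φ ψ).2
    ⟨hΔ.mem_of_hderiv (h₁.mono hΓΔ), hΔ.mem_of_hderiv (h₂.mono hΓΔ)⟩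

theorem and_left (h : Hderiv n m Γ (.and φ ψ)) : Hderiv n m Γ φ :=
  hderiv_iff_forall_maxConsistent.2 fun _ hΔ hΓΔ =>
    ((hΔ.isBooleanValuation.and φ ψ).1 (hΔ.mem_of_hderiv (h.mono hΓΔ))).1

theorem and_right (h : Hderiv n m Γ (.and φ ψ)) : Hderiv n m Γ ψ :=
  hderiv_iff_forall_maxConsistent.2 fun _ hΔ hΓΔ =>
    ((hΔ.isBooleanValuation.and φ ψ).1 (hΔ.mem_of_hderiv (h.mono hΓΔ))).2

open Classical in
theorem exists_range_of_iUnion {ι : Type*} {S : ι → Set (Fml m)}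
    (hS : ∀ i φ, Hderiv n m (S i) φ → φ ∈ S i) (h : Hderiv n m (⋃ i, S i) φ) :
    ∃ χ : ι → Fml m, (∀ i, χ i ∈ S i) ∧ Hderiv n m (Set.range χ) φ := by
  have htop : ∀ i, botF.negF ∈ S i := fun i => hS i _ (impF_self (.pos 0))
  induction h using closure_induction with
  | prem ψ hψ =>
    obtain ⟨j, hj⟩ := Set.mem_iUnion.1 hψ
    refine ⟨Function.update (fun _ => botF.negF) j ψ, fun i => ?_, .prem ⟨j, by simp⟩⟩
    by_cases hij : i = j
    · subst hij; simpa using hj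
    · simpa [hij] using htop i
  | uniform ψ hψ => exact ⟨fun _ => botF.negF, htop, hψ _⟩
  | mp ψ θ _ _ ih₁ ih₂ =>
    obtain ⟨χ₁, hχ₁, h₁⟩ := ih₁
    obtain ⟨χ₂, hχ₂, h₂⟩ := ih₂
    refine ⟨fun i => .and (χ₁ i) (χ₂ i),
      fun i => hS i _ ((prem (hχ₁ i)).and_intro (prem (hχ₂ i))), .mp (h₁.trans ?_) (h₂.trans ?_)⟩
    · rintro _ ⟨i, rfl⟩; exact (prem (Set.mem_range_self i)).and_left
    · rintro _ ⟨i, rfl⟩; exact (prem (Set.mem_range_self i)).and_right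

end Hderiv

structure IsS5Modality (n m : ℕ) (b d : Fml m → Fml m) : Prop where
  negF_box : ∀ φ, (b φ).negF = d φ.negF
  nec : ∀ {Γ φ}, Hderiv n m ∅ φ → Hderiv n m Γ (b φ)
  K : ∀ {Γ} φ ψ, Hderiv n m Γ ((b (φ.impF ψ)).impF ((b φ).impF (b ψ)))
  T : ∀ {Γ} φ, Hderiv n m Γ ((b φ).impF φ)
  five : ∀ {Γ} φ, Hderiv n m Γ ((d φ).impF (b (d φ)))

theorem isS5Modality_box (n m : ℕ) : IsS5Modality n m .box .dia :=
  ⟨fun _ => rfl, .nec, .boxK, .boxT, .box5⟩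

theorem isS5Modality_ag (n : ℕ) {m : ℕ} (i : Fin m) : IsS5Modality n m (.ag i) (.dag i) :=
  ⟨fun _ => rfl, fun h => .mp (.bridge i _) (.nec h), .agK i, .agT i, .ag5 i⟩

namespace IsS5Modality

variable {n m : ℕ} {b d : Fml m → Fml m} (hb : IsS5Modality n m b d)
  {Δ Δ' : Set (Fml m)} {φ : Fml m}
include hb

theorem negF_dia (φ : Fml m) : (d φ).negF = b φ.negF := by
  rw [← negF_negF (b φ.negF), hb.negF_box, negF_negF]

theorem mem_of_box_mem (hΔ : MaxConsistent n m Δ) (h : b φ ∈ Δ) : φ ∈ Δ :=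
  hΔ.mem_of_hderiv (.mp (hb.T φ) (.prem h))

theorem box_mem_of_hderiv (hΔ : MaxConsistent n m Δ) (h : Hderiv n m (b ⁻¹' Δ) φ) :
    b φ ∈ Δ := by
  induction h using Hderiv.closure_induction with
  | prem ψ hψ => exact hψ
  | uniform ψ hψ => exact hΔ.mem_of_hderiv (hb.nec (hψ ∅))
  | mp ψ χ _ _ h₁ h₂ => exact hΔ.mem_of_hderiv (.mp (.mp (hb.K ψ χ) (.prem h₁)) (.prem h₂))

theorem dia_mem_of_mem (hΔ : MaxConsistent n m Δ) (h : φ ∈ Δ) : d φ ∈ Δ := by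
  by_contra hd
  rw [← hΔ.negF_mem_iff, hb.negF_dia] at hd
  exact hΔ.negF_mem_iff.1 (hb.mem_of_box_mem hΔ hd) h

theorem box_dia_mem (hΔ : MaxConsistent n m Δ) (h : d φ ∈ Δ) : b (d φ) ∈ Δ :=
  hΔ.mem_of_hderiv (.mp (hb.five φ) (.prem h))

theorem box_mem_of_dia_box_mem (hΔ : MaxConsistent n m Δ) (h : d (b φ) ∈ Δ) : b φ ∈ Δ := by
  by_contra hbφ
  rw [← hΔ.negF_mem_iff, hb.negF_box] at hbφ
  refine hΔ.negF_mem_iff.1 ?_ h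
  rw [hb.negF_dia, hb.negF_box]
  exact hb.box_dia_mem hΔ hbφ

theorem box_box_mem (hΔ : MaxConsistent n m Δ) (h : b φ ∈ Δ) : b (b φ) ∈ Δ :=
  hb.box_mem_of_hderiv hΔ <| hderiv_iff_forall_maxConsistent.2 fun _ hΔ' hsub =>
    hb.box_mem_of_dia_box_mem hΔ' (hsub (hb.box_dia_mem hΔ (hb.dia_mem_of_mem hΔ h)))

theorem preimage_eq_of_subset (hΔ : MaxConsistent n m Δ) (hΔ' : MaxConsistent n m Δ')
    (h : b ⁻¹' Δ ⊆ Δ') : b ⁻¹' Δ = b ⁻¹' Δ' := by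
  ext ψ
  refine ⟨fun hψ => h (hb.box_box_mem hΔ hψ), fun hψ => ?_⟩
  by_contra hn
  rw [Set.mem_preimage, ← hΔ.negF_mem_iff, hb.negF_box] at hn
  refine hΔ'.negF_mem_iff.1 ?_ hψ
  rw [hb.negF_box]
  exact h (hb.box_dia_mem hΔ hn)

theorem exists_of_dia_mem (hΔ : MaxConsistent n m Δ) (h : d φ ∈ Δ) :
    ∃ Δ', MaxConsistent n m Δ' ∧ b ⁻¹' Δ ⊆ Δ' ∧ φ ∈ Δ' := by
  have hcon : Consistent n m (insert φ (b ⁻¹' Δ)) := fun hbot => by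
    refine hΔ.negF_mem_iff.1 ?_ (hb.box_mem_of_hderiv hΔ (Hderiv.negF_of_insert_bot hbot))
    rwa [hb.negF_box, negF_negF]
  obtain ⟨Δ', hsub, hΔ'⟩ := exists_maxConsistent_superset hcon
  exact ⟨Δ', hΔ', (Set.subset_insert _ _).trans hsub, hsub (Set.mem_insert _ _)⟩

theorem box_mem_iff (hΔ : MaxConsistent n m Δ) :
    b φ ∈ Δ ↔ ∀ Δ', MaxConsistent n m Δ' → b ⁻¹' Δ' = b ⁻¹' Δ → φ ∈ Δ' := by
  refine ⟨fun h Δ' hΔ' he => hb.mem_of_box_mem hΔ' (he.symm ▸ h : φ ∈ b ⁻¹' Δ'),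
    fun h => ?_⟩
  by_contra hn
  rw [← hΔ.negF_mem_iff, hb.negF_box] at hn
  obtain ⟨Δ', hΔ', hsub, hφ⟩ := hb.exists_of_dia_mem hΔ hn
  exact hΔ'.negF_mem_iff.1 hφ (h Δ' hΔ' (hb.preimage_eq_of_subset hΔ hΔ' hsub).symm)

theorem dia_mem_iff (hΔ : MaxConsistent n m Δ) :
    d φ ∈ Δ ↔ ∃ Δ', MaxConsistent n m Δ' ∧ b ⁻¹' Δ' = b ⁻¹' Δ ∧ φ ∈ Δ' := by
  rw [← not_iff_not, ← hΔ.negF_mem_iff, hb.negF_dia, hb.box_mem_iff hΔ]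
  simp only [not_exists, not_and]
  exact forall_congr' fun Δ' => forall_congr' fun hΔ' =>
    imp_congr_right fun _ => hΔ'.negF_mem_iff

theorem dia_mem_congr (hΔ : MaxConsistent n m Δ) (hΔ' : MaxConsistent n m Δ')
    (h : b ⁻¹' Δ = b ⁻¹' Δ') : d φ ∈ Δ ↔ d φ ∈ Δ' := by
  rw [hb.dia_mem_iff hΔ, hb.dia_mem_iff hΔ', h]

open Classical in
theorem exists_box_mem_forall_not_mem (hΔ : MaxConsistent n m Δ) {ι : Type*}
    (s : Finset ι) {Δs : ι → Set (Fml m)} (hΔs : ∀ j ∈ s, MaxConsistent n m (Δs j))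
    (h : ∀ j ∈ s, ¬ b ⁻¹' Δ ⊆ Δs j) : ∃ g, b g ∈ Δ ∧ ∀ j ∈ s, g ∉ Δs j := by
  induction s using Finset.induction_on with
  | empty => exact ⟨botF.negF, hb.box_mem_of_hderiv hΔ (Hderiv.impF_self _), by simp⟩
  | insert j s _ ih =>
    simp only [Finset.forall_mem_insert] at hΔs h ⊢
    obtain ⟨g, hg, hgs⟩ := ih hΔs.2 h.2
    obtain ⟨ψ, hψ, hψj⟩ := Set.not_subset.1 h.1
    refine ⟨.and g ψ, hb.box_mem_of_hderiv hΔ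
      ((Hderiv.prem (show g ∈ b ⁻¹' Δ from hg)).and_intro (.prem hψ)), ?_, ?_⟩
    · simp [(hΔs.1.isBooleanValuation).and, hψj]
    · exact fun k hk => by simp [((hΔs.2 k hk).isBooleanValuation).and, hgs k hk]

end IsS5Modality

section Canonical

variable {n m : ℕ} {Δ Δ' : Set (Fml m)}

theorem box_preimage_eq_of_ag_preimage_eq {i : Fin m} (hΔ : MaxConsistent n m Δ)
    (hΔ' : MaxConsistent n m Δ') (h : Fml.ag i ⁻¹' Δ = Fml.ag i ⁻¹' Δ') :
    Fml.box ⁻¹' Δ = Fml.box ⁻¹' Δ' := by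
  suffices key : ∀ {Δ Δ' : Set (Fml m)}, MaxConsistent n m Δ → MaxConsistent n m Δ' →
      Fml.ag i ⁻¹' Δ = Fml.ag i ⁻¹' Δ' → Fml.box ⁻¹' Δ ⊆ Fml.box ⁻¹' Δ' from
    (key hΔ hΔ' h).antisymm (key hΔ' hΔ h.symm)
  intro Δ Δ' hΔ hΔ' h ψ hψ
  have hag : Fml.box ψ ∈ Fml.ag i ⁻¹' Δ :=
    hΔ.mem_of_hderiv (.mp (.bridge i _) (.prem ((isS5Modality_box n m).box_box_mem hΔ hψ)))
  rw [h] at hag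
  exact (isS5Modality_ag n i).mem_of_box_mem (φ := Fml.box ψ) hΔ' hag

theorem exists_forall_ag_preimage_eq (hm : 1 ≤ m) (u : Fin m → Set (Fml m))
    (hu : ∀ i, MaxConsistent n m (u i))
    (hbox : ∀ i j, Fml.box ⁻¹' u i = Fml.box ⁻¹' u j) :
    ∃ v, MaxConsistent n m v ∧ ∀ i, Fml.ag i ⁻¹' u i = Fml.ag i ⁻¹' v := by
  suffices hcon : Consistent n m (⋃ i, Fml.ag i ⁻¹' u i) by
    obtain ⟨v, hsub, hv⟩ := exists_maxConsistent_superset hcon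
    exact ⟨v, hv, fun i => (isS5Modality_ag n i).preimage_eq_of_subset (hu i) hv
      ((Set.subset_iUnion (fun i => Fml.ag i ⁻¹' u i) i).trans hsub)⟩
  intro hbot
  obtain ⟨χ, hχ, hχbot⟩ := Hderiv.exists_range_of_iUnion
    (fun i _ => (isS5Modality_ag n i).box_mem_of_hderiv (hu i)) hbot
  set Θ := u ⟨0, hm⟩
  have hΘ : MaxConsistent n m Θ := hu _
  set A := conjUpTo (agIdx χ) (m - 1)
  have hA : Hderiv n m ∅ A.negF := by
    refine Hderiv.negF_of_insert_bot (hχbot.trans ?_)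
    rintro _ ⟨i, rfl⟩
    refine hderiv_iff_forall_maxConsistent.2 fun Γ hΓ hsub => ?_
    have hAΓ : A ∈ Γ := hsub (Set.mem_insert _ _)
    exact (isS5Modality_ag n i).mem_of_box_mem hΓ
      ((hΓ.isBooleanValuation.conjUpTo_agIdx hm χ).1 hAΓ i)
  have hdiaA : Fml.dia A ∈ Θ := by
    refine (hΘ.impF_mem_iff).1 (hΘ.mem_of_hderiv (.ioa χ)) ?_
    refine (hΘ.isBooleanValuation.conjUpTo_diaAgIdx hm χ).2 fun i => ?_
    exact ((isS5Modality_box n m).dia_mem_congr (hu i) hΘ (hbox _ _)).1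
      ((isS5Modality_box n m).dia_mem_of_mem (hu i) (hχ i))
  refine hΘ.negF_mem_iff.1 ?_ (hΘ.mem_of_hderiv (.nec hA))
  simpa [Fml.negF] using hdiaA

theorem exists_ag_preimage_subset (hn : 0 < n) (i : Fin m) (Δ : ℕ → Set (Fml m))
    (hΔ : ∀ k, MaxConsistent n m (Δ k))
    (hbox : ∀ k l, Fml.box ⁻¹' Δ k = Fml.box ⁻¹' Δ l) :
    ∃ k j, k < j ∧ j ≤ n ∧ Fml.ag i ⁻¹' Δ k ⊆ Δ j := by
  by_contra! h
  have hsep : ∀ k, ∃ g, Fml.ag i g ∈ Δ k ∧ ∀ j ∈ Finset.Ioc k n, g ∉ Δ j := fun k =>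
    (isS5Modality_ag n i).exists_box_mem_forall_not_mem (hΔ k) _ (fun j _ => hΔ j)
      fun j hj => h k j (Finset.mem_Ioc.1 hj).1 (Finset.mem_Ioc.1 hj).2
  choose g hg using hsep
  have hT := (hΔ n).isBooleanValuation
  have hante : apcAnte i g (n - 1) ∈ Δ n := by
    refine (hT.conjUpTo _ _).2 fun j hj => ?_
    refine ((isS5Modality_box n m).dia_mem_congr (hΔ j) (hΔ n) (hbox _ _)).1
      ((isS5Modality_box n m).dia_mem_of_mem (hΔ j) ?_)
    exact ((hΔ j).isBooleanValuation.prefNegConj _ _ _).2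
      ⟨fun l hl => (hg l).2 j (Finset.mem_Ioc.2 ⟨hl, by omega⟩), (hg j).1⟩
  obtain ⟨k, hk, hgk⟩ := (hT.disjUpTo _ _).1
    (((hΔ n).impF_mem_iff).1 ((hΔ n).mem_of_hderiv (.apc hn i g)) hante)
  exact (hg k).2 n (Finset.mem_Ioc.2 ⟨by omega, le_rfl⟩) hgk

abbrev CanonicalWorld (n m : ℕ) (Δ₀ : Set (Fml m)) : Type :=
  {Δ : Set (Fml m) // MaxConsistent n m Δ ∧ Fml.box ⁻¹' Δ = Fml.box ⁻¹' Δ₀}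

def canonicalModel (hm : 1 ≤ m) {Δ₀ : Set (Fml m)} (hΔ₀ : MaxConsistent n m Δ₀) :
    ModelOn n m (CanonicalWorld n m Δ₀) where
  nonemp := ⟨⟨Δ₀, hΔ₀, rfl⟩⟩
  rel i Δ Δ' := Fml.ag i ⁻¹' Δ.1 = Fml.ag i ⁻¹' Δ'.1
  refl _ _ := rfl
  symm _ _ _ := Eq.symm
  trans _ _ _ _ := Eq.trans
  ioa u := by
    obtain ⟨v, hv, hrel⟩ := exists_forall_ag_preimage_eq hm (fun i => (u i).1)
      (fun i => (u i).2.1) fun i j => (u i).2.2.trans (u j).2.2.symm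
    exact ⟨⟨v, hv, (box_preimage_eq_of_ag_preimage_eq (u ⟨0, hm⟩).2.1 hv
      (hrel _)).symm.trans (u ⟨0, hm⟩).2.2⟩, hrel⟩
  apc hn i w := by
    let w' (k : ℕ) := w (Fin.ofNat (n + 1) k)
    obtain ⟨k, j, hkj, hjn, hsub⟩ := exists_ag_preimage_subset hn i (fun k => (w' k).1)
      (fun k => (w' k).2.1) fun k l => (w' k).2.2.trans (w' l).2.2.symm
    refine ⟨_, _, ?_,
      (isS5Modality_ag n i).preimage_eq_of_subset (w' k).2.1 (w' j).2.1 hsub⟩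
    rw [Fin.lt_def, Fin.val_ofNat, Fin.val_ofNat, Nat.mod_eq_of_lt (by omega),
      Nat.mod_eq_of_lt (by omega)]
    exact hkj
  val p := {Δ | Fml.pos p ∈ Δ.1}

theorem sat_canonicalModel_iff (hm : 1 ≤ m) {Δ₀ : Set (Fml m)}
    (hΔ₀ : MaxConsistent n m Δ₀) (φ : Fml m) (Δ : CanonicalWorld n m Δ₀) :
    Sat (canonicalModel hm hΔ₀) Δ φ ↔ φ ∈ Δ.1 := by
  induction φ generalizing Δ with
  | pos p => rfl
  | neg p => exact (Δ.2.1.negF_mem_iff (φ := .pos p)).symm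
  | and φ ψ ihφ ihψ => rw [Δ.2.1.isBooleanValuation.and, ← ihφ, ← ihψ]; rfl
  | or φ ψ ihφ ihψ => rw [Δ.2.1.isBooleanValuation.or, ← ihφ, ← ihψ]; rfl
  | box φ ih =>
    simp only [Sat, ih, (isS5Modality_box n m).box_mem_iff Δ.2.1]
    exact ⟨fun h Δ' hΔ' he => h ⟨Δ', hΔ', he.trans Δ.2.2⟩,
      fun h u => h u.1 u.2.1 (u.2.2.trans Δ.2.2.symm)⟩
  | dia φ ih =>
    simp only [Sat, ih, (isS5Modality_box n m).dia_mem_iff Δ.2.1]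
    exact ⟨fun ⟨u, hu⟩ => ⟨u.1, u.2.1, u.2.2.trans Δ.2.2.symm, hu⟩,
      fun ⟨Δ', hΔ', he, hφ⟩ => ⟨⟨Δ', hΔ', he.trans Δ.2.2⟩, hφ⟩⟩
  | ag i φ ih =>
    simp only [Sat, ih, (isS5Modality_ag n i).box_mem_iff Δ.2.1]
    exact ⟨fun h Δ' hΔ' he => h ⟨Δ', hΔ',
      (box_preimage_eq_of_ag_preimage_eq hΔ' Δ.2.1 he).trans Δ.2.2⟩ he.symm,
      fun h u hu => h u.1 u.2.1 hu.symm⟩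
  | dag i φ ih =>
    simp only [Sat, ih, (isS5Modality_ag n i).dia_mem_iff Δ.2.1]
    exact ⟨fun ⟨u, hu, hφ⟩ => ⟨u.1, u.2.1, hu.symm, hφ⟩, fun ⟨Δ', hΔ', he, hφ⟩ =>
      ⟨⟨Δ', hΔ', (box_preimage_eq_of_ag_preimage_eq hΔ' Δ.2.1 he).trans Δ.2.2⟩, he.symm,
        hφ⟩⟩

theorem hderiv_of_semConseq (hm : 1 ≤ m) {Γ : Set (Fml m)} {φ : Fml m}
    (h : SemConseq n m Γ φ) : Hderiv n m Γ φ := by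
  refine hderiv_iff_forall_maxConsistent.2 fun Δ hΔ hΓΔ => ?_
  let w : CanonicalWorld n m Δ := ⟨Δ, hΔ, rfl⟩
  exact (sat_canonicalModel_iff hm hΔ φ w).1
    (h _ _ w fun ψ hψ => (sat_canonicalModel_iff hm hΔ ψ w).2 (hΓΔ hψ))

end Canonical

section Soundness

variable {n m : ℕ} {W : Type}

theorem sat_negF (M : ModelOn n m W) (w : W) (φ : Fml m) :
    Sat M w φ.negF ↔ ¬ Sat M w φ := by
  induction φ generalizing w <;> simp_all [Sat, Fml.negF, imp_iff_not_or]

theorem ModelOn.isBooleanValuation (M : ModelOn n m W) (w : W) :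
    IsBooleanValuation (Sat M w) :=
  ⟨sat_negF M w, fun _ _ => Iff.rfl, fun _ _ => Iff.rfl⟩

theorem sat_ioaAx (hm : 1 ≤ m) (M : ModelOn n m W) (f : Fin m → Fml m) (w : W) :
    Sat M w (ioaAx f) := by
  have hT := M.isBooleanValuation
  refine ((hT w).impF _ _).2 fun hante => ?_
  choose u hu using ((hT w).conjUpTo_diaAgIdx hm f).1 hante
  obtain ⟨v, hv⟩ := M.ioa u
  exact ⟨v, ((hT v).conjUpTo_agIdx hm f).2 fun i v' hvv' =>
    hu i v' (M.trans i _ _ _ (hv i) hvv')⟩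

theorem sat_apcAx (hn : 0 < n) (M : ModelOn n m W) (i : Fin m) (f : ℕ → Fml m) (w : W) :
    Sat M w (apcAx i f (n - 1)) := by
  have hT := M.isBooleanValuation
  rw [apcAx, (hT w).impF, apcAnte, (hT w).conjUpTo, (hT w).disjUpTo]
  intro hante
  by_contra! hw
  choose u hu using hante
  simp only [(hT _).prefNegConj] at hu
  let v (t : Fin (n + 1)) : W := if ht : t.val < n then u t (by omega) else w
  have hv_not : ∀ (k : ℕ) (t : Fin (n + 1)), k < t → ¬ Sat M (v t) (f k) := by
    intro k t hkt
    by_cases ht : t.val < n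
    · simpa [v, ht] using (hu t _).1 k hkt
    · simpa [v, ht] using hw k (by omega)
  obtain ⟨k, j, hkj, hrel⟩ := M.apc hn i v
  have hk : k.val < n := by omega
  exact hv_not k j hkj ((by simpa [v, hk] using (hu k (by omega)).2 : Sat M (v k) (.ag i (f k)))
    _ hrel)

theorem semConseq_of_hderiv (hm : 1 ≤ m) {Γ : Set (Fml m)} {φ : Fml m}
    (h : Hderiv n m Γ φ) : SemConseq n m Γ φ := by
  induction h with
  | prem hφ => exact fun W M w hΓ => hΓ _ hφ
  | mp _ _ ih₁ ih₂ =>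
    exact fun W M w hΓ => ((M.isBooleanValuation w).impF _ _).1 (ih₁ W M w hΓ) (ih₂ W M w hΓ)
  | nec _ ih => exact fun W M _ _ u => ih W M u (by simp)
  | ioa f => exact fun W M w _ => sat_ioaAx hm M f w
  | apc hn i f => exact fun W M w _ => sat_apcAx hn M i f w
  | agT i φ =>
    intro W M w _
    simp only [(M.isBooleanValuation _).impF, Sat]
    exact fun h => h w (M.refl i w)
  | ag5 i φ =>
    intro W M w _
    simp only [(M.isBooleanValuation _).impF, Sat]
    exact fun ⟨u, hwu, hu⟩ v hwv => ⟨u, M.trans i v w u (M.symm i w v hwv) hwu, hu⟩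
  | _ =>
    intro W M w _
    simp only [(M.isBooleanValuation _).impF, sat_negF, Sat, or_iff_not_imp_left, not_forall,
      exists_prop]
    all_goals aesop

end Soundness

/-- For all `n, m ∈ ℕ` with `m ≥ 1`, every set `Γ` of `L^m`-formulas and
every `φ ∈ L^m`: `Γ ⊢_{Ldm_n^m} φ` iff `Γ ⊩ φ`. -/
theorem hilbert_soundness_completeness (n m : ℕ) (hm : 1 ≤ m)
    (Γ : Set (Fml m)) (φ : Fml m) :
    Hderiv n m Γ φ ↔ SemConseq n m Γ φ :=
  ⟨semConseq_of_hderiv hm, hderiv_of_semConseq hm⟩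

end Stit
end

section
/- Variable substitution is height-preserving admissible in G3Ldm_n^m: if a labelled sequent Λ has a G3Ldm_n^m-derivation of height h, then for any labels x, y, the sequent Λ(y/x), obtained from Λ by replacing every occurrence of the label x by y, has a G3Ldm_n^m-derivation of height at most h. -/
namespace Stit

/-!
Renaming labels along an arbitrary map `f : ℕ → ℕ` is height-preserving admissible in every
calculus `SeqH fl`, by induction on the derivation; substitution of `y` for `x` is the map
`substLab x y`. Each rule commutes with renaming. For a rule with an eigenvariable `v`, rename
the premise along `f` updated to send `v` to a label fresh for the renamed conclusion: since `v`
does not occur in the conclusion, the updated map agrees with `f` there. Quantifying over all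
maps is what lets a structural induction go through, as the updated map is not a substitution.
-/

section Rename

variable {m : ℕ}

def renameR (f : ℕ → ℕ) (R : RAtoms m) : RAtoms m :=
  R.map fun a => (a.1, f a.2.1, f a.2.2)

def renameF (f : ℕ → ℕ) (Γ : LFmls m) : LFmls m :=
  Γ.map fun e => (f e.1, e.2)

@[simp]
lemma renameR_cons (f : ℕ → ℕ) (i : Fin m) (a b : ℕ) (R : RAtoms m) :
    renameR f (((i, a, b) : RAtom m) ::ₘ R) = ((i, f a, f b) : RAtom m) ::ₘ renameR f R :=
  Multiset.map_cons _ _ _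

@[simp]
lemma renameR_add (f : ℕ → ℕ) (A B : RAtoms m) :
    renameR f (A + B) = renameR f A + renameR f B :=
  Multiset.map_add _ _ _

@[simp]
lemma renameF_cons (f : ℕ → ℕ) (w : ℕ) (φ : Fml m) (Γ : LFmls m) :
    renameF f ((w, φ) ::ₘ Γ) = (f w, φ) ::ₘ renameF f Γ :=
  Multiset.map_cons _ _ _

@[simp]
lemma renameR_ioaAtoms (f : ℕ → ℕ) (u : Fin m → ℕ) (v : ℕ) :
    renameR f (ioaAtoms u v) = ioaAtoms (fun i => f (u i)) (f v) := by
  simp only [renameR, ioaAtoms, Multiset.map_coe, List.map_map]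
  rfl

lemma freshIn_cons_iff {v w : ℕ} {φ : Fml m} {R : RAtoms m} {Γ : LFmls m} :
    freshIn v R ((w, φ) ::ₘ Γ) ↔ w ≠ v ∧ freshIn v R Γ := by
  simp only [freshIn, Multiset.forall_mem_cons]
  tauto

lemma exists_freshIn (R : RAtoms m) (Γ : LFmls m) : ∃ v, freshIn v R Γ := by
  obtain ⟨v, hv⟩ := Infinite.exists_notMem_finset
    (R.map (·.2.1) + R.map (·.2.2) + Γ.map (·.1)).toFinset
  refine ⟨v, fun a ha => ⟨?_, ?_⟩, fun e he => ?_⟩ <;> rintro rfl <;> simp_all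

lemma freshIn.renameR_update {v : ℕ} {R : RAtoms m} {Γ : LFmls m} (hv : freshIn v R Γ)
    (f : ℕ → ℕ) (v' : ℕ) : renameR (Function.update f v v') R = renameR f R :=
  Multiset.map_congr rfl fun a ha => by
    simp [Function.update_of_ne (hv.1 a ha).1, Function.update_of_ne (hv.1 a ha).2]

lemma freshIn.renameF_update {v : ℕ} {R : RAtoms m} {Γ : LFmls m} (hv : freshIn v R Γ)
    (f : ℕ → ℕ) (v' : ℕ) : renameF (Function.update f v v') Γ = renameF f Γ :=
  Multiset.map_congr rfl fun e he => by simp [Function.update_of_ne (hv.2 e he)]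

lemma Reach.rename {R : RAtoms m} {i : Fin m} {w u : ℕ} (f : ℕ → ℕ) (hr : Reach R i w u) :
    Reach (renameR f R) i (f w) (f u) := by
  induction hr with
  | refl => exact .refl _
  | fwd _ hm ih => exact ih.fwd (Multiset.mem_map_of_mem _ hm)
  | bwd _ hm ih => exact ih.bwd (Multiset.mem_map_of_mem _ hm)

theorem SeqH.rename {fl : Flags} {n h : ℕ} {R : RAtoms m} {Γ : LFmls m} (f : ℕ → ℕ)
    (hd : SeqH fl n m h R Γ) : SeqH fl n m h (renameR f R) (renameF f Γ) := by
  induction hd generalizing f with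
  | id w p => simpa using .id (f w) p
  | andR _ _ ih₁ ih₂ => simpa using SeqH.andR (by simpa using ih₁ f) (by simpa using ih₂ f)
  | orR _ ih => simpa using SeqH.orR (by simpa using ih f)
  | @boxR _ R Γ w v φ hv _ ih =>
    obtain ⟨v', hv'⟩ := exists_freshIn (renameR f R) (renameF f ((w, .box φ) ::ₘ Γ))
    obtain ⟨hwv, hvΓ⟩ := freshIn_cons_iff.1 hv
    have hprem := ih (Function.update f v v')
    simp only [renameF_cons, Function.update_self, Function.update_of_ne hwv,
      hv.renameR_update, hvΓ.renameF_update] at hprem hv' ⊢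
    exact .boxR hv' hprem
  | diaR _ ih => simpa using SeqH.diaR (by simpa using ih f)
  | @agR _ R Γ w v i φ hfl hv _ ih =>
    obtain ⟨v', hv'⟩ := exists_freshIn (renameR f R) (renameF f ((w, .ag i φ) ::ₘ Γ))
    obtain ⟨hwv, hvΓ⟩ := freshIn_cons_iff.1 hv
    have hprem := ih (Function.update f v v')
    simp only [renameR_cons, renameF_cons, Function.update_self, Function.update_of_ne hwv,
      hv.renameR_update, hvΓ.renameF_update] at hprem hv' ⊢
    exact .agR hfl hv' hprem
  | @agRKeep _ R Γ w v i φ hfl hv _ ih =>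
    obtain ⟨v', hv'⟩ := exists_freshIn (renameR f R) (renameF f ((w, .ag i φ) ::ₘ Γ))
    obtain ⟨hwv, hvΓ⟩ := freshIn_cons_iff.1 hv
    have hprem := ih (Function.update f v v')
    simp only [renameR_cons, renameF_cons, Function.update_self, Function.update_of_ne hwv,
      hv.renameR_update, hvΓ.renameF_update] at hprem hv' ⊢
    exact .agRKeep hfl hv' hprem
  | dagR hfl _ ih => simpa using SeqH.dagR hfl (by simpa using ih f)
  | reflR hfl _ ih => exact .reflR hfl (by simpa using ih f)
  | euclR hfl _ ih => simpa using SeqH.euclR hfl (by simpa using ih f)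
  | @ioaR _ R Γ hfl u v hv _ ih =>
    obtain ⟨v', hv'⟩ := exists_freshIn (renameR f R) (renameF f Γ)
    have hprem := ih (Function.update f v v')
    simp only [renameR_add, renameR_ioaAtoms, Function.update_self, hv.renameR_update,
      hv.renameF_update] at hprem
    exact .ioaR hfl _ v' hv' hprem
  | apcR hn i w _ ih =>
    exact .apcR hn i (fun k => f (w k)) fun k j hkj => by simpa using ih k j hkj f
  | prR hfl hr _ ih => simpa using SeqH.prR hfl (hr.rename f) (by simpa using ih f)

end Rename

theorem g3_substitution_hp_admissible_general (n m : ℕ)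
    (h : ℕ) (R : RAtoms m) (Γ : LFmls m) (x y : ℕ)
    (hd : SeqH G3flags n m h R Γ) :
    SeqH G3flags n m h (substR x y R) (substF x y Γ) :=
  hd.rename (substLab x y)

/-- Variable substitution is height-preserving admissible in `G3Ldm_n^m`:
if `R, Γ` has a derivation of height (at most) `h`, then so does the sequent obtained by
replacing every occurrence of the label `x` by `y`. -/
theorem g3_substitution_hp_admissible (n m : ℕ) (hm : 1 ≤ m)
    (h : ℕ) (R : RAtoms m) (Γ : LFmls m) (x y : ℕ)
    (hd : SeqH G3flags n m h R Γ) :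
    SeqH G3flags n m h (substR x y R) (substF x y Γ) :=
  g3_substitution_hp_admissible_general n m h R Γ x y hd

end Stit
end
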